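/- arXiv:2205.01375 — 4 statements merged into one kernel-verified Lean document; each statement's English description precedes it below -/
import Mathlib

section
/- Let ν, κ, γ, a, b, 𝒞 be positive real constants and define, for ϱ > 0, a₁ = (a + (2/3)κ + ν)ϱ² + (2/3)γ + 𝒞b, a₂ = [(νa + (2/3)νκ + (2/3)aκ)ϱ² + (2/3)γν + 𝒞bν + (2/3)γa + (2/3)κ𝒞b + 5/3]ϱ², a₃ = [(2/3)aκν ϱ⁴ + ((2/3)(γa + κ𝒞b)ν + (5/3)a + (2/3)κ)ϱ² + (5/3)𝒞b + (8/9)γ]ϱ². Then the second Hurwitz determinant A₂ := a₁a₂ − a₃ is strictly positive for every ϱ > 0; indeed A₂ = a₂₁ϱ⁶ + a₂₂ϱ⁴ + a₂₃ϱ² where a₂₁ = (a + (2/3)κ + ν)(νa + (2/3)νκ + (2/3)aκ) − (2/3)aκν > 0, a₂₂ = ((2/3)γ + 𝒞b)(νa + (2/3)νκ + (2/3)aκ) + (a + (2/3)κ + ν)((2/3)γν + 𝒞bν + (2/3)γa + (2/3)κ𝒞b + 5/3) − ((2/3)(γa + κ𝒞b)ν + (5/3)a + (2/3)κ) > 0,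 and a₂₃ = ((2/3)γ + 𝒞b)((2/3)γν + 𝒞bν + (2/3)γa + (2/3)κ𝒞b + 5/3) − ((5/3)𝒞b + (8/9)γ) > 0. -/
/-- Positivity of the second Hurwitz determinant `A₂ = a₁a₂ − a₃` of the characteristic
polynomial of the symbol matrix, together with the explicit expansion
`A₂ = a₂₁ϱ⁶ + a₂₂ϱ⁴ + a₂₃ϱ²` and the positivity of each coefficient. -/
theorem hurwitz_A2_pos (ν κ γ a b 𝒞 : ℝ)
    (hν : 0 < ν) (hκ : 0 < κ) (hγ : 0 < γ) (ha : 0 < a) (hb : 0 < b) (h𝒞 : 0 < 𝒞) :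
    (a + (2 / 3) * κ + ν) * (ν * a + (2 / 3) * ν * κ + (2 / 3) * a * κ)
        - (2 / 3) * a * κ * ν > 0
    ∧ ((2 / 3) * γ + 𝒞 * b) * (ν * a + (2 / 3) * ν * κ + (2 / 3) * a * κ)
        + (a + (2 / 3) * κ + ν)
          * ((2 / 3) * γ * ν + 𝒞 * b * ν + (2 / 3) * γ * a + (2 / 3) * κ * 𝒞 * b + 5 / 3)
        - ((2 / 3) * (γ * a + κ * 𝒞 * b) * ν + (5 / 3) * a + (2 / 3) * κ) > 0
    ∧ ((2 / 3) * γ + 𝒞 * b)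
        * ((2 / 3) * γ * ν + 𝒞 * b * ν + (2 / 3) * γ * a + (2 / 3) * κ * 𝒞 * b + 5 / 3)
        - ((5 / 3) * 𝒞 * b + (8 / 9) * γ) > 0
    ∧ ∀ ϱ : ℝ, 0 < ϱ →
        ((a + (2 / 3) * κ + ν) * ϱ ^ 2 + (2 / 3) * γ + 𝒞 * b)
            * (((ν * a + (2 / 3) * ν * κ + (2 / 3) * a * κ) * ϱ ^ 2
                + (2 / 3) * γ * ν + 𝒞 * b * ν + (2 / 3) * γ * a + (2 / 3) * κ * 𝒞 * b
                + 5 / 3) * ϱ ^ 2)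
          - (((2 / 3) * a * κ * ν * ϱ ^ 4
                + ((2 / 3) * (γ * a + κ * 𝒞 * b) * ν + (5 / 3) * a + (2 / 3) * κ) * ϱ ^ 2
                + (5 / 3) * 𝒞 * b + (8 / 9) * γ) * ϱ ^ 2)
        = ((a + (2 / 3) * κ + ν) * (ν * a + (2 / 3) * ν * κ + (2 / 3) * a * κ)
              - (2 / 3) * a * κ * ν) * ϱ ^ 6
          + (((2 / 3) * γ + 𝒞 * b) * (ν * a + (2 / 3) * ν * κ + (2 / 3) * a * κ)
              + (a + (2 / 3) * κ + ν)
                * ((2 / 3) * γ * ν + 𝒞 * b * ν + (2 / 3) * γ * a + (2 / 3) * κ * 𝒞 * b + 5 / 3)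
              - ((2 / 3) * (γ * a + κ * 𝒞 * b) * ν + (5 / 3) * a + (2 / 3) * κ)) * ϱ ^ 4
          + (((2 / 3) * γ + 𝒞 * b)
              * ((2 / 3) * γ * ν + 𝒞 * b * ν + (2 / 3) * γ * a + (2 / 3) * κ * 𝒞 * b + 5 / 3)
              - ((5 / 3) * 𝒞 * b + (8 / 9) * γ)) * ϱ ^ 2
        ∧ ((a + (2 / 3) * κ + ν) * ϱ ^ 2 + (2 / 3) * γ + 𝒞 * b)
            * (((ν * a + (2 / 3) * ν * κ + (2 / 3) * a * κ) * ϱ ^ 2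
                + (2 / 3) * γ * ν + 𝒞 * b * ν + (2 / 3) * γ * a + (2 / 3) * κ * 𝒞 * b
                + 5 / 3) * ϱ ^ 2)
          - (((2 / 3) * a * κ * ν * ϱ ^ 4
                + ((2 / 3) * (γ * a + κ * 𝒞 * b) * ν + (5 / 3) * a + (2 / 3) * κ) * ϱ ^ 2
                + (5 / 3) * 𝒞 * b + (8 / 9) * γ) * ϱ ^ 2) > 0 := by
  have h1 : (a + (2 / 3) * κ + ν) * (ν * a + (2 / 3) * ν * κ + (2 / 3) * a * κ)
      - (2 / 3) * a * κ * ν > 0 := by nlinarith [mul_pos ha hκ, mul_pos hν ha, mul_pos hν hκ, mul_pos (mul_pos ha hκ) hν, mul_pos (mul_pos ha ha) hν, mul_pos (mul_pos hκ hκ) hν, mul_pos (mul_pos ha ha) hκ, mul_pos (mul_pos hν hν) ha, mul_pos (mul_pos hν hν) hκ, mul_pos (mul_pos ha hκ) hκ]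
  have h2 : ((2 / 3) * γ + 𝒞 * b) * (ν * a + (2 / 3) * ν * κ + (2 / 3) * a * κ)
      + (a + (2 / 3) * κ + ν)
        * ((2 / 3) * γ * ν + 𝒞 * b * ν + (2 / 3) * γ * a + (2 / 3) * κ * 𝒞 * b + 5 / 3)
      - ((2 / 3) * (γ * a + κ * 𝒞 * b) * ν + (5 / 3) * a + (2 / 3) * κ) > 0 := by
    nlinarith [mul_pos hγ ha, mul_pos h𝒞 hb, mul_pos (mul_pos hγ ha) hν, mul_pos (mul_pos (mul_pos h𝒞 hb) hκ) hν, mul_pos (mul_pos hγ hν) hν, mul_pos (mul_pos (mul_pos h𝒞 hb) hν) hν, mul_pos (mul_pos hγ ha) ha, mul_pos (mul_pos (mul_pos h𝒞 hb) hκ) ha, mul_pos (mul_pos hγ hκ) hν, mul_pos (mul_pos (mul_pos h𝒞 hb) ha) hν, mul_pos hν ha, mul_pos hν hκ, mul_pos ha hκ, mul_pos (mul_pos hγ hν) ha, mul_pos (mul_pos hγ hκ) ha, mul_pos (mul_pos (mul_pos h𝒞 hb) hκ) hκ, mul_pos (mul_pos hγ hν) hκ]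
  have h3 : ((2 / 3) * γ + 𝒞 * b)
      * ((2 / 3) * γ * ν + 𝒞 * b * ν + (2 / 3) * γ * a + (2 / 3) * κ * 𝒞 * b + 5 / 3)
      - ((5 / 3) * 𝒞 * b + (8 / 9) * γ) > 0 := by
    nlinarith [mul_pos hγ hν, mul_pos h𝒞 hb, mul_pos hγ ha, mul_pos (mul_pos h𝒞 hb) hν, mul_pos (mul_pos h𝒞 hb) hκ, mul_pos (mul_pos hγ hγ) hν, mul_pos (mul_pos (mul_pos h𝒞 hb) h𝒞) hb, mul_pos (mul_pos hγ h𝒞) hb, hγ, h𝒞, hb]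
  refine ⟨h1, h2, h3, fun ϱ hϱ => ?_⟩
  have heq : ((a + (2 / 3) * κ + ν) * ϱ ^ 2 + (2 / 3) * γ + 𝒞 * b)
            * (((ν * a + (2 / 3) * ν * κ + (2 / 3) * a * κ) * ϱ ^ 2
                + (2 / 3) * γ * ν + 𝒞 * b * ν + (2 / 3) * γ * a + (2 / 3) * κ * 𝒞 * b
                + 5 / 3) * ϱ ^ 2)
          - (((2 / 3) * a * κ * ν * ϱ ^ 4
                + ((2 / 3) * (γ * a + κ * 𝒞 * b) * ν + (5 / 3) * a + (2 / 3) * κ) * ϱ ^ 2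
                + (5 / 3) * 𝒞 * b + (8 / 9) * γ) * ϱ ^ 2)
        = ((a + (2 / 3) * κ + ν) * (ν * a + (2 / 3) * ν * κ + (2 / 3) * a * κ)
              - (2 / 3) * a * κ * ν) * ϱ ^ 6
          + (((2 / 3) * γ + 𝒞 * b) * (ν * a + (2 / 3) * ν * κ + (2 / 3) * a * κ)
              + (a + (2 / 3) * κ + ν)
                * ((2 / 3) * γ * ν + 𝒞 * b * ν + (2 / 3) * γ * a + (2 / 3) * κ * 𝒞 * b + 5 / 3)
              - ((2 / 3) * (γ * a + κ * 𝒞 * b) * ν + (5 / 3) * a + (2 / 3) * κ)) * ϱ ^ 4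
          + (((2 / 3) * γ + 𝒞 * b)
              * ((2 / 3) * γ * ν + 𝒞 * b * ν + (2 / 3) * γ * a + (2 / 3) * κ * 𝒞 * b + 5 / 3)
              - ((5 / 3) * 𝒞 * b + (8 / 9) * γ)) * ϱ ^ 2 := by ring
  refine ⟨heq, ?_⟩
  rw [heq]
  have h6 : 0 < ϱ ^ 6 := by positivity
  have h4 : 0 < ϱ ^ 4 := by positivity
  have h2' : 0 < ϱ ^ 2 := by positivity
  positivity
end

section
/- Let ν, κ, γ, a, b, 𝒞 be positive real constants. For every ϱ > 0, every complex eigenvalue λ of the matrix A(ϱ) has strictly positive real part. -/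
/-!
The eigenvalues of `A(ϱ)` are the roots of `det (μ - A(ϱ))`, a real quartic in `μ` whose
coefficients alternate in sign, so `-μ` is a root of a quartic with positive coefficients.
Expanding its third Hurwitz determinant in terms of the diagonal entries of `A(ϱ)` exhibits it as
a sum of nonnegative terms with a positive one, and the Routh–Hurwitz criterion then puts `-μ` in
the open left half-plane.

For the criterion itself: a real root `x ≥ 0` is excluded by positivity of the coefficients; a
nonreal root `z = x + iy` makes the real quadratic `(z - x)² + y²` divide the quartic, and
comparing coefficients writes `Δ₃` as `-2x (a₃ + 2x)` times a positive number, so `Δ₃ ≤ 0`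
when `x ≥ 0`.
-/

open Matrix

/-- The symbol matrix `A(ϱ)` of the linearized diffusion-approximation radiation
hydrodynamics system in Fourier variables. -/
noncomputable def radA (ν κ γ a b 𝒞 ϱ : ℝ) : Matrix (Fin 4) (Fin 4) ℝ :=
  !![0, ϱ, 0, 0;
     -ϱ, ν * ϱ ^ 2, -ϱ, -ϱ / (3 * 𝒞);
     0, (2 / 3) * ϱ, (2 / 3) * κ * ϱ ^ 2 + (2 / 3) * γ, -(2 / 3) * b;
     0, 0, -𝒞 * γ, a * ϱ ^ 2 + 𝒞 * b]

/-- The third Hurwitz determinant of `z⁴ + a₃ z³ + a₂ z² + a₁ z + a₀`. -/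
def hurwitzDet₃ (a₃ a₂ a₁ a₀ : ℝ) : ℝ := a₃ * a₂ * a₁ - a₁ ^ 2 - a₃ ^ 2 * a₀

lemma eq_zero_and_eq_zero_of_ofReal_mul_add_ofReal_eq_zero {α β : ℝ} {z : ℂ} (hz : z.im ≠ 0)
    (h : (α : ℂ) * z + β = 0) : α = 0 ∧ β = 0 := by
  have hα : α * z.im = 0 := by simpa using congrArg Complex.im h
  have hα : α = 0 := (mul_eq_zero.mp hα).resolve_right hz
  exact ⟨hα, by simpa [hα] using h⟩

theorem re_neg_of_quartic_eq_zero {a₃ a₂ a₁ a₀ : ℝ} {z : ℂ}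
    (hz : z ^ 4 + a₃ * z ^ 3 + a₂ * z ^ 2 + a₁ * z + a₀ = 0)
    (h₃ : 0 < a₃) (h₂ : 0 < a₂) (h₁ : 0 < a₁) (h₀ : 0 < a₀)
    (hΔ : 0 < hurwitzDet₃ a₃ a₂ a₁ a₀) : z.re < 0 := by
  by_contra! hx
  set x := z.re
  rcases eq_or_ne z.im 0 with hy | hy
  · have hzx : z = (x : ℂ) := Complex.ext rfl (by simp [hy])
    have hreal : x ^ 4 + a₃ * x ^ 3 + a₂ * x ^ 2 + a₁ * x + a₀ = 0 := by
      rw [hzx] at hz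
      exact_mod_cast hz
    have : 0 < x ^ 4 + a₃ * x ^ 3 + a₂ * x ^ 2 + a₁ * x + a₀ := by positivity
    linarith
  set m := x ^ 2 + z.im ^ 2
  set u := a₃ + 2 * x
  set v := a₂ - m + 2 * x * u
  have hquad : z ^ 2 - 2 * x * z + m = 0 := by
    push_cast [m]
    linear_combination (-(z - x + z.im * Complex.I)) * Complex.re_add_im z
      + (z.im : ℂ) ^ 2 * Complex.I_sq
  have hrem : ((a₁ + 2 * x * v - m * u : ℝ) : ℂ) * z + (a₀ - m * v : ℝ) = 0 := by
    simp only [v, u]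
    push_cast
    linear_combination hz - (z ^ 2 + (a₃ + 2 * x) * z + (a₂ - m + 2 * x * (a₃ + 2 * x))) * hquad
  obtain ⟨hα, hβ⟩ := eq_zero_and_eq_zero_of_ofReal_mul_add_ofReal_eq_zero hy hrem
  have hΔ_eq : hurwitzDet₃ a₃ a₂ a₁ a₀ = -2 * x * u * ((m - v) ^ 2 + a₃ * a₁) := by
    rw [hurwitzDet₃, show a₁ = m * u - 2 * x * v by linarith, show a₀ = m * v by linarith]
    ring
  have : 0 ≤ x * u * ((m - v) ^ 2 + a₃ * a₁) := by positivity
  linarith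

/-- The coefficients are those of `det (μ - A)` for a matrix `A` shaped like `A(ϱ)`, with diagonal
`0, p, q, r`, `s = ϱ²` and `d` the determinant of the lower right `2 × 2` block. -/
lemma hurwitzDet₃_pos_of_nonneg {p q r s d γ : ℝ} (hp : 0 ≤ p) (hr : 0 ≤ r) (hs : 0 < s)
    (hd : 0 ≤ d) (hγ : 0 ≤ γ) (hqγ : γ < 3 * q) :
    0 < hurwitzDet₃ (p + q + r) (d + p * (q + r) + 5 / 3 * s)
      (p * d + s * (q + r) + 2 / 3 * s * r + 2 / 9 * s * γ) (s * d) := by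
  have hq : 0 < q := by linarith
  have h3qγ : 0 < 3 * q - γ := sub_pos.2 hqγ
  set a₁ := p * d + s * (q + r) + 2 / 3 * s * r + 2 / 9 * s * γ
  set e := 2 / 3 * s * r + 2 / 9 * s * γ
  have hΔ_eq : hurwitzDet₃ (p + q + r) (d + p * (q + r) + 5 / 3 * s) a₁ (s * d)
      = p * (q + r) * (d - s) ^ 2 + 2 / 3 * p * (q + r) * s ^ 2 + e * (q + r) * d
        + p ^ 2 * (q + r) * d * (p + q + r) + (s * (q + r) + e) * p * (q + r) * (p + q + r)
        + 2 / 3 * p ^ 2 * s * d + 5 / 3 * p * s * e + a₁ * (2 / 9 * s * (3 * q - γ)) := by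
    simp only [hurwitzDet₃, a₁, e]
    ring
  rw [hΔ_eq]
  positivity

noncomputable section

namespace RadA

variable (ν κ γ a b 𝒞 ϱ : ℝ)

/-- `((2/3) κ ϱ² + (2/3) γ) (a ϱ² + 𝒞 b) - (2/3) b 𝒞 γ`, the determinant of the lower right
`2 × 2` block of `A(ϱ)`. -/
def blockDet : ℝ := (2 / 3) * ϱ ^ 2 * (κ * a * ϱ ^ 2 + κ * 𝒞 * b + γ * a)

def coeff₃ : ℝ := ν * ϱ ^ 2 + ((2 / 3) * κ * ϱ ^ 2 + (2 / 3) * γ) + (a * ϱ ^ 2 + 𝒞 * b)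

def coeff₂ : ℝ :=
  blockDet κ γ a b 𝒞 ϱ + ν * ϱ ^ 2 * (((2 / 3) * κ * ϱ ^ 2 + (2 / 3) * γ) + (a * ϱ ^ 2 + 𝒞 * b))
    + 5 / 3 * ϱ ^ 2

def coeff₁ : ℝ :=
  ν * ϱ ^ 2 * blockDet κ γ a b 𝒞 ϱ
    + ϱ ^ 2 * (((2 / 3) * κ * ϱ ^ 2 + (2 / 3) * γ) + (a * ϱ ^ 2 + 𝒞 * b))
    + 2 / 3 * ϱ ^ 2 * (a * ϱ ^ 2 + 𝒞 * b) + 2 / 9 * ϱ ^ 2 * γ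

def coeff₀ : ℝ := ϱ ^ 2 * blockDet κ γ a b 𝒞 ϱ

variable {ν κ γ a b 𝒞 ϱ}

lemma det_scalar_sub_radA (h𝒞 : 𝒞 ≠ 0) (μ : ℂ) :
    (scalar (Fin 4) μ - (radA ν κ γ a b 𝒞 ϱ).map Complex.ofReal).det
      = μ ^ 4 - coeff₃ ν κ γ a b 𝒞 ϱ * μ ^ 3 + coeff₂ ν κ γ a b 𝒞 ϱ * μ ^ 2
        - coeff₁ ν κ γ a b 𝒞 ϱ * μ + coeff₀ κ γ a b 𝒞 ϱ := by
  have h𝒞' : (𝒞 : ℂ) ≠ 0 := Complex.ofReal_ne_zero.mpr h𝒞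
  simp [radA, det_succ_row_zero, Fin.sum_univ_succ, Fin.succAbove, coeff₃, coeff₂, coeff₁,
    coeff₀, blockDet]
  field_simp
  ring

lemma hurwitzDet₃_coeff_pos (hν : 0 ≤ ν) (hκ : 0 < κ) (hγ : 0 ≤ γ) (ha : 0 ≤ a) (hb : 0 ≤ b)
    (h𝒞 : 0 ≤ 𝒞) (hϱ : ϱ ≠ 0) :
    0 < hurwitzDet₃ (coeff₃ ν κ γ a b 𝒞 ϱ) (coeff₂ ν κ γ a b 𝒞 ϱ) (coeff₁ ν κ γ a b 𝒞 ϱ)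
      (coeff₀ κ γ a b 𝒞 ϱ) := by
  have hκϱ : 0 < κ * ϱ ^ 2 := by positivity
  exact hurwitzDet₃_pos_of_nonneg (by positivity) (by positivity) (by positivity)
    (by unfold blockDet; positivity) hγ (by linarith)

end RadA

end

/-- For every `ϱ > 0`, every complex eigenvalue of `A(ϱ)` has strictly positive real part
(Routh–Hurwitz criterion). -/
theorem radA_eigenvalues_pos_re (ν κ γ a b 𝒞 : ℝ)
    (hν : 0 < ν) (hκ : 0 < κ) (hγ : 0 < γ) (ha : 0 < a) (hb : 0 < b) (h𝒞 : 0 < 𝒞) :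
    ∀ ϱ : ℝ, 0 < ϱ →
      ∀ μ : ℂ, μ ∈ spectrum ℂ ((radA ν κ γ a b 𝒞 ϱ).map Complex.ofReal) → 0 < μ.re := by
  intro ϱ hϱ μ hμ
  have hdet := (mem_spectrum_iff_isRoot_charpoly.mp hμ).eq_zero
  rw [eval_charpoly, RadA.det_scalar_sub_radA h𝒞.ne'] at hdet
  have hroot : (-μ) ^ 4 + RadA.coeff₃ ν κ γ a b 𝒞 ϱ * (-μ) ^ 3
      + RadA.coeff₂ ν κ γ a b 𝒞 ϱ * (-μ) ^ 2 + RadA.coeff₁ ν κ γ a b 𝒞 ϱ * (-μ)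
      + RadA.coeff₀ κ γ a b 𝒞 ϱ = 0 := by
    linear_combination hdet
  have hre := re_neg_of_quartic_eq_zero hroot
    (by unfold RadA.coeff₃; positivity)
    (by unfold RadA.coeff₂ RadA.blockDet; positivity)
    (by unfold RadA.coeff₁ RadA.blockDet; positivity)
    (by unfold RadA.coeff₀ RadA.blockDet; positivity)
    (RadA.hurwitzDet₃_coeff_pos hν.le hκ hγ.le ha.le hb.le h𝒞.le hϱ.ne')
  simpa using hre
end

section
/- Let ν, κ, γ, a, b, 𝒞 be positive real constants, let ϱ ≥ 0, and define c₁ = (b + γ/(3𝒞))/(3b𝒞 + 2γ), c₂ = 1/(3b𝒞 + 2γ), c₃ = (2κb𝒞 + 2aγ)/(3b𝒞 + 2γ), c₄ = (6a𝒞 − 4κ𝒞)/(3b𝒞 + 2γ), c₅(ϱ) = (4κγ + 9ab𝒞)ϱ²/(3(3b𝒞 + 2γ)) + (2/3)γ + b𝒞, c₆ = (2κγb − 3abγ)/(3(3b𝒞 + 2γ)). Suppose ρ, d, Θ, Ξ, 𝒮¹, 𝒮², 𝒮³, 𝒮⁴ : [0, ∞) → ℂ are functions with ρ, d, Θ, Ξ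 differentiable, satisfying for all t ≥ 0: ρ′ + ϱd = 𝒮¹; d′ − ϱρ + νϱ²d − c₁ϱΘ − c₂ϱΞ = 𝒮²; Θ′ + 2𝒞ϱd + c₃ϱ²Θ − c₄ϱ²Ξ = 𝒮³; Ξ′ + (2γ/3)ϱd + c₅(ϱ)Ξ − c₆ϱ²Θ = 𝒮⁴. Then for all t ≥ 0: (1/2)·d/dt[ |ρ|² + |d|² + (c₁/(2𝒞))|Θ|² + (3c₂/(2γ))|Ξ|² ] + νϱ²|d|² + (c₁c₃/(2𝒞))ϱ²|Θ|² + (3c₂c₅(ϱ)/(2γ))|Ξ|² = ( c₁c₄/(2𝒞) + 3c₂c₆/(2γ) )·ϱ²·Re(Θ·conj(Ξ)) + Re(𝒮¹·conj(ρ)) + Re(𝒮²·conj(d)) + (c₁/(2𝒞))·Re(𝒮³·conj(Θ)) + (3c₂/(2γ))·Re(𝒮⁴·conj(Ξ)). -/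
/-!
Test each equation of the system against its own unknown in the real inner product
`⟪z, w⟫ = Re (w * conj z)` and add the results with weights `1, 1, c₁ / (2𝒞), 3c₂ / (2γ)`.
These weights are chosen exactly so that the couplings `ρ ↔ d`, `d ↔ Θ` and `d ↔ Ξ` become
skew-symmetric and cancel; what survives is the dissipation, the `Θ ↔ Ξ` cross term and the
sources. Since `d/dt ‖u‖² = 2 ⟪u, u'⟫`, the left-hand side is the time derivative of the
weighted energy.
-/

open Complex Set

open scoped RealInnerProductSpace

theorem radiation_energy_balance {E : Type*} [NormedAddCommGroup E] [InnerProductSpace ℝ E]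
    {ν 𝒞 γ ϱ c₁ c₂ c₃ c₄ c₅ c₆ : ℝ} (h𝒞 : 𝒞 ≠ 0) (hγ : γ ≠ 0)
    {ρ d Θ Ξ ρ' d' Θ' Ξ' S₁ S₂ S₃ S₄ : E}
    (h₁ : ρ' + ϱ • d = S₁)
    (h₂ : d' - ϱ • ρ + (ν * ϱ ^ 2) • d - (c₁ * ϱ) • Θ - (c₂ * ϱ) • Ξ = S₂)
    (h₃ : Θ' + (2 * 𝒞 * ϱ) • d + (c₃ * ϱ ^ 2) • Θ - (c₄ * ϱ ^ 2) • Ξ = S₃)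
    (h₄ : Ξ' + (2 * γ / 3 * ϱ) • d + c₅ • Ξ - (c₆ * ϱ ^ 2) • Θ = S₄) :
    ⟪ρ, ρ'⟫ + ⟪d, d'⟫ + c₁ / (2 * 𝒞) * ⟪Θ, Θ'⟫ + 3 * c₂ / (2 * γ) * ⟪Ξ, Ξ'⟫
      = (c₁ * c₄ / (2 * 𝒞) + 3 * c₂ * c₆ / (2 * γ)) * ϱ ^ 2 * ⟪Ξ, Θ⟫
        + ⟪ρ, S₁⟫ + ⟪d, S₂⟫ + c₁ / (2 * 𝒞) * ⟪Θ, S₃⟫ + 3 * c₂ / (2 * γ) * ⟪Ξ, S₄⟫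
        - (ν * ϱ ^ 2 * ‖d‖ ^ 2 + c₁ * c₃ / (2 * 𝒞) * ϱ ^ 2 * ‖Θ‖ ^ 2
          + 3 * c₂ * c₅ / (2 * γ) * ‖Ξ‖ ^ 2) := by
  have e₁ := congrArg (⟪ρ, ·⟫) h₁
  have e₂ := congrArg (⟪d, ·⟫) h₂
  have e₃ := congrArg (⟪Θ, ·⟫) h₃
  have e₄ := congrArg (⟪Ξ, ·⟫) h₄
  simp only [inner_add_right, inner_sub_right, real_inner_smul_right,
    real_inner_self_eq_norm_sq] at e₁ e₂ e₃ e₄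
  rw [real_inner_comm ρ d] at e₂
  rw [real_inner_comm d Θ, real_inner_comm Ξ Θ] at e₃
  rw [real_inner_comm d Ξ] at e₄
  have hw₃ : c₁ / (2 * 𝒞) * (2 * 𝒞 * ϱ) = c₁ * ϱ := by field_simp
  have hw₄ : 3 * c₂ / (2 * γ) * (2 * γ / 3 * ϱ) = c₂ * ϱ := by field_simp
  linear_combination e₁ + e₂ + c₁ / (2 * 𝒞) * e₃ + 3 * c₂ / (2 * γ) * e₄
    - ⟪d, Θ⟫ * hw₃ - ⟪d, Ξ⟫ * hw₄

theorem fourier_energy_identity_general (ν γ 𝒞 ϱ : ℝ)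
    (hγ : 0 < γ) (h𝒞 : 0 < 𝒞)
    (c₁ c₂ c₃ c₄ c₅ c₆ : ℝ)
    (ρ d Θ Ξ ρ' d' Θ' Ξ' S1 S2 S3 S4 : ℝ → ℂ)
    (hρ : ∀ t ∈ Ici (0 : ℝ), HasDerivWithinAt ρ (ρ' t) (Ici 0) t)
    (hd : ∀ t ∈ Ici (0 : ℝ), HasDerivWithinAt d (d' t) (Ici 0) t)
    (hΘ : ∀ t ∈ Ici (0 : ℝ), HasDerivWithinAt Θ (Θ' t) (Ici 0) t)
    (hΞ : ∀ t ∈ Ici (0 : ℝ), HasDerivWithinAt Ξ (Ξ' t) (Ici 0) t)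
    (heq1 : ∀ t : ℝ, 0 ≤ t → ρ' t + (ϱ : ℂ) * d t = S1 t)
    (heq2 : ∀ t : ℝ, 0 ≤ t →
      d' t - (ϱ : ℂ) * ρ t + (ν * ϱ ^ 2 : ℝ) * d t - (c₁ * ϱ : ℝ) * Θ t
        - (c₂ * ϱ : ℝ) * Ξ t = S2 t)
    (heq3 : ∀ t : ℝ, 0 ≤ t →
      Θ' t + (2 * 𝒞 * ϱ : ℝ) * d t + (c₃ * ϱ ^ 2 : ℝ) * Θ t
        - (c₄ * ϱ ^ 2 : ℝ) * Ξ t = S3 t)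
    (heq4 : ∀ t : ℝ, 0 ≤ t →
      Ξ' t + (2 * γ / 3 * ϱ : ℝ) * d t + (c₅ : ℝ) * Ξ t - (c₆ * ϱ ^ 2 : ℝ) * Θ t = S4 t) :
    ∀ t : ℝ, 0 ≤ t →
      HasDerivWithinAt
        (fun s => (1 / 2) * (‖ρ s‖ ^ 2 + ‖d s‖ ^ 2 + (c₁ / (2 * 𝒞)) * ‖Θ s‖ ^ 2
          + (3 * c₂ / (2 * γ)) * ‖Ξ s‖ ^ 2))
        ((c₁ * c₄ / (2 * 𝒞) + 3 * c₂ * c₆ / (2 * γ)) * ϱ ^ 2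
            * (Θ t * (starRingEnd ℂ) (Ξ t)).re
          + (S1 t * (starRingEnd ℂ) (ρ t)).re
          + (S2 t * (starRingEnd ℂ) (d t)).re
          + (c₁ / (2 * 𝒞)) * (S3 t * (starRingEnd ℂ) (Θ t)).re
          + (3 * c₂ / (2 * γ)) * (S4 t * (starRingEnd ℂ) (Ξ t)).re
          - (ν * ϱ ^ 2 * ‖d t‖ ^ 2 + (c₁ * c₃ / (2 * 𝒞)) * ϱ ^ 2 * ‖Θ t‖ ^ 2
            + (3 * c₂ * c₅ / (2 * γ)) * ‖Ξ t‖ ^ 2))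
        (Ici 0) t := by
  intro t ht
  have balance := radiation_energy_balance (E := ℂ) h𝒞.ne' hγ.ne'
    (by simpa only [real_smul] using heq1 t ht) (by simpa only [real_smul] using heq2 t ht)
    (by simpa only [real_smul] using heq3 t ht) (by simpa only [real_smul] using heq4 t ht)
  have energy := ((((hρ t ht).norm_sq.add (hd t ht).norm_sq).add
      ((hΘ t ht).norm_sq.const_mul (c₁ / (2 * 𝒞)))).add
      ((hΞ t ht).norm_sq.const_mul (3 * c₂ / (2 * γ)))).const_mul (1 / 2)
  refine energy.congr_deriv ?_
  simp only [Complex.inner] at balance ⊢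
  linear_combination balance

/-- The Fourier-space energy identity for the transformed linearized
diffusion-approximation radiation hydrodynamics system at frequency modulus `ϱ`. -/
theorem fourier_energy_identity (ν κ γ a b 𝒞 ϱ : ℝ)
    (hν : 0 < ν) (hκ : 0 < κ) (hγ : 0 < γ) (ha : 0 < a) (hb : 0 < b) (h𝒞 : 0 < 𝒞)
    (hϱ : 0 ≤ ϱ)
    (c₁ c₂ c₃ c₄ c₅ c₆ : ℝ)
    (hc₁ : c₁ = (b + γ / (3 * 𝒞)) / (3 * b * 𝒞 + 2 * γ))
    (hc₂ : c₂ = 1 / (3 * b * 𝒞 + 2 * γ))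
    (hc₃ : c₃ = (2 * κ * b * 𝒞 + 2 * a * γ) / (3 * b * 𝒞 + 2 * γ))
    (hc₄ : c₄ = (6 * a * 𝒞 - 4 * κ * 𝒞) / (3 * b * 𝒞 + 2 * γ))
    (hc₅ : c₅ = (4 * κ * γ + 9 * a * b * 𝒞) * ϱ ^ 2 / (3 * (3 * b * 𝒞 + 2 * γ))
          + (2 / 3) * γ + b * 𝒞)
    (hc₆ : c₆ = (2 * κ * γ * b - 3 * a * b * γ) / (3 * (3 * b * 𝒞 + 2 * γ)))
    (ρ d Θ Ξ ρ' d' Θ' Ξ' S1 S2 S3 S4 : ℝ → ℂ)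
    (hρ : ∀ t ∈ Ici (0 : ℝ), HasDerivWithinAt ρ (ρ' t) (Ici 0) t)
    (hd : ∀ t ∈ Ici (0 : ℝ), HasDerivWithinAt d (d' t) (Ici 0) t)
    (hΘ : ∀ t ∈ Ici (0 : ℝ), HasDerivWithinAt Θ (Θ' t) (Ici 0) t)
    (hΞ : ∀ t ∈ Ici (0 : ℝ), HasDerivWithinAt Ξ (Ξ' t) (Ici 0) t)
    (heq1 : ∀ t : ℝ, 0 ≤ t → ρ' t + (ϱ : ℂ) * d t = S1 t)
    (heq2 : ∀ t : ℝ, 0 ≤ t →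
      d' t - (ϱ : ℂ) * ρ t + (ν * ϱ ^ 2 : ℝ) * d t - (c₁ * ϱ : ℝ) * Θ t
        - (c₂ * ϱ : ℝ) * Ξ t = S2 t)
    (heq3 : ∀ t : ℝ, 0 ≤ t →
      Θ' t + (2 * 𝒞 * ϱ : ℝ) * d t + (c₃ * ϱ ^ 2 : ℝ) * Θ t
        - (c₄ * ϱ ^ 2 : ℝ) * Ξ t = S3 t)
    (heq4 : ∀ t : ℝ, 0 ≤ t →
      Ξ' t + (2 * γ / 3 * ϱ : ℝ) * d t + (c₅ : ℝ) * Ξ t - (c₆ * ϱ ^ 2 : ℝ) * Θ t = S4 t) :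
    ∀ t : ℝ, 0 ≤ t →
      HasDerivWithinAt
        (fun s => (1 / 2) * (‖ρ s‖ ^ 2 + ‖d s‖ ^ 2 + (c₁ / (2 * 𝒞)) * ‖Θ s‖ ^ 2
          + (3 * c₂ / (2 * γ)) * ‖Ξ s‖ ^ 2))
        ((c₁ * c₄ / (2 * 𝒞) + 3 * c₂ * c₆ / (2 * γ)) * ϱ ^ 2
            * (Θ t * (starRingEnd ℂ) (Ξ t)).re
          + (S1 t * (starRingEnd ℂ) (ρ t)).re
          + (S2 t * (starRingEnd ℂ) (d t)).re
          + (c₁ / (2 * 𝒞)) * (S3 t * (starRingEnd ℂ) (Θ t)).re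
          + (3 * c₂ / (2 * γ)) * (S4 t * (starRingEnd ℂ) (Ξ t)).re
          - (ν * ϱ ^ 2 * ‖d t‖ ^ 2 + (c₁ * c₃ / (2 * 𝒞)) * ϱ ^ 2 * ‖Θ t‖ ^ 2
            + (3 * c₂ * c₅ / (2 * γ)) * ‖Ξ t‖ ^ 2))
        (Ici 0) t :=
  fourier_energy_identity_general ν γ 𝒞 ϱ hγ h𝒞 c₁ c₂ c₃ c₄ c₅ c₆ ρ d Θ Ξ ρ' d' Θ' Ξ' S1 S2 S3 S4 hρ
    hd hΘ hΞ heq1 heq2 heq3 heq4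
end

section
/- Let ν, κ, γ, a, b, 𝒞 be positive real constants, let c₁ = (b + γ/(3𝒞))/(3b𝒞 + 2γ), c₂ = 1/(3b𝒞 + 2γ), c₃ = (2κb𝒞 + 2aγ)/(3b𝒞 + 2γ), c₅(ϱ) = (4κγ + 9ab𝒞)ϱ²/(3(3b𝒞 + 2γ)) + (2/3)γ + b𝒞, and let R₀ > 0. If 0 < β₃ ≤ min{ 2ν/3, c₃/(16𝒞c₁), 1/(2R₀) }, then there exists a constant C₄ > 0 such that for all ϱ with 0 ≤ ϱ ≤ R₀ and all complex numbers ρ, d, Θ, Ξ: C₄·ϱ²·[ (1/2)|ρ|² − β₃ϱ·Re(ρ·conj(d)) + (1/2)|d|² + (c₁/(4𝒞))|Θ|² + (3c₂/(4γ))|Ξ|² ] ≤ (3β₃/4)ϱ²|ρ|² + (ν − β₃)ϱ²|d|² + ( c₁c₃/(4𝒞) − 2β₃c₁² )ϱ²|Θ|² + (3c₂c₅(ϱ)/(2γ))|Ξ|². -/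
open Complex
open scoped ComplexConjugate

/-!
Since `|Re (ρ d̄)| ≤ |ρ| |d| ≤ (|ρ|² + |d|²)/2` and `β₃ ϱ ≤ β₃ R₀ ≤ 1/2`, the Lyapunov functional
is bounded by `(3/4)(|ρ|² + |d|²) + (c₁/(4𝒞))|Θ|² + (3c₂/(4γ))|Ξ|²`. It therefore suffices to
compare coefficients: the smallness of `β₃` keeps `ν - β₃ ≥ ν/3` and
`c₁c₃/(4𝒞) - 2β₃c₁² ≥ c₁c₃/(8𝒞)`, and `C₄ ϱ² ≤ C₄ R₀²` is absorbed by the constant part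
`(2/3)γ + b𝒞` of `c₅(ϱ)`, so any `C₄ ≤ min(β₃, ν/3, c₃/2, 2((2/3)γ + b𝒞)/R₀²)` works.
-/

theorem abs_re_mul_conj_le (z w : ℂ) : |(z * conj w).re| ≤ ‖z‖ * ‖w‖ := by
  simpa using abs_re_le_norm (z * conj w)

theorem half_sq_sub_re_mul_conj_add_half_sq_le {t : ℝ} (ht : |t| ≤ 1 / 2) (z w : ℂ) :
    (1 / 2) * ‖z‖ ^ 2 - t * (z * conj w).re + (1 / 2) * ‖w‖ ^ 2
      ≤ (3 / 4) * ‖z‖ ^ 2 + (3 / 4) * ‖w‖ ^ 2 := by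
  have hcross : |t * (z * conj w).re| ≤ (1 / 2) * (‖z‖ * ‖w‖) := by
    rw [abs_mul]
    exact mul_le_mul ht (abs_re_mul_conj_le z w) (abs_nonneg _) (by norm_num)
  nlinarith [neg_abs_le (t * (z * conj w).re), sq_nonneg (‖z‖ - ‖w‖)]

theorem mul_le_of_le_div_of_le {α : Type*} [Field α] [LinearOrder α] [IsStrictOrderedRing α]
    {x y R K : α} (hx : 0 ≤ x) (hyR : y ≤ R) (hR : 0 < R) (hxR : x ≤ K / R) : x * y ≤ K :=
  (mul_le_mul_of_nonneg_left hyR hx).trans ((le_div_iff₀ hR).1 hxR)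

theorem mul_le_sub_two_mul_sq_of_le_div {c₁ c₃ 𝒞 β C : ℝ} (h𝒞 : 0 < 𝒞) (hc₁ : 0 < c₁)
    (hβ : β ≤ c₃ / (16 * 𝒞 * c₁)) (hC : C ≤ c₃ / 2) :
    C * (c₁ / (4 * 𝒞)) ≤ c₁ * c₃ / (4 * 𝒞) - 2 * β * c₁ ^ 2 := by
  rw [le_div_iff₀ (by positivity)] at hβ
  rw [mul_div_assoc', le_sub_iff_add_le, div_add' _ _ _ (by positivity),
    div_le_div_iff_of_pos_right (by positivity)]
  nlinarith [mul_le_mul_of_nonneg_left hC hc₁.le]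

/-- The dissipation term dominates `ϱ²` times the low-frequency Lyapunov functional
for `0 ≤ ϱ ≤ R₀`, provided `β₃` is small enough. -/
theorem lyapunov_dissipation_domination (ν κ γ a b 𝒞 : ℝ)
    (hν : 0 < ν) (hκ : 0 < κ) (hγ : 0 < γ) (ha : 0 < a) (hb : 0 < b) (h𝒞 : 0 < 𝒞)
    (c₁ c₂ c₃ : ℝ)
    (hc₁ : c₁ = (b + γ / (3 * 𝒞)) / (3 * b * 𝒞 + 2 * γ))
    (hc₂ : c₂ = 1 / (3 * b * 𝒞 + 2 * γ))
    (hc₃ : c₃ = (2 * κ * b * 𝒞 + 2 * a * γ) / (3 * b * 𝒞 + 2 * γ))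
    (R₀ β₃ : ℝ) (hR₀ : 0 < R₀) (hβ₃ : 0 < β₃)
    (hβ₃' : β₃ ≤ min (2 * ν / 3) (min (c₃ / (16 * 𝒞 * c₁)) (1 / (2 * R₀)))) :
    ∃ C₄ : ℝ, 0 < C₄ ∧
      ∀ (ϱ : ℝ), 0 ≤ ϱ → ϱ ≤ R₀ →
        ∀ ρ d Θ Ξ : ℂ,
          C₄ * ϱ ^ 2 *
              ((1 / 2) * ‖ρ‖ ^ 2 - β₃ * ϱ * (ρ * (starRingEnd ℂ) d).re
                + (1 / 2) * ‖d‖ ^ 2 + (c₁ / (4 * 𝒞)) * ‖Θ‖ ^ 2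
                + (3 * c₂ / (4 * γ)) * ‖Ξ‖ ^ 2) ≤
            (3 * β₃ / 4) * ϱ ^ 2 * ‖ρ‖ ^ 2 + (ν - β₃) * ϱ ^ 2 * ‖d‖ ^ 2
              + (c₁ * c₃ / (4 * 𝒞) - 2 * β₃ * c₁ ^ 2) * ϱ ^ 2 * ‖Θ‖ ^ 2
              + (3 * c₂ * ((4 * κ * γ + 9 * a * b * 𝒞) * ϱ ^ 2 / (3 * (3 * b * 𝒞 + 2 * γ))
                  + (2 / 3) * γ + b * 𝒞) / (2 * γ)) * ‖Ξ‖ ^ 2 := by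
  have hc₁pos : 0 < c₁ := by rw [hc₁]; positivity
  have hc₂pos : 0 < c₂ := by rw [hc₂]; positivity
  have hc₃pos : 0 < c₃ := by rw [hc₃]; positivity
  simp only [le_min_iff] at hβ₃'
  obtain ⟨hβν, hβc, hβR⟩ := hβ₃'
  set C₄ := min β₃ (min (ν / 3) (min (c₃ / 2) (2 * ((2 / 3) * γ + b * 𝒞) / R₀ ^ 2)))
  obtain ⟨hCβ, hCν, hCc₃, hCR₀⟩ : C₄ ≤ β₃ ∧ C₄ ≤ ν / 3 ∧ C₄ ≤ c₃ / 2 ∧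
      C₄ ≤ 2 * ((2 / 3) * γ + b * 𝒞) / R₀ ^ 2 := by
    simp only [C₄, min_le_iff, le_refl, true_or, or_true, and_self]
  refine ⟨C₄, by positivity, fun ϱ hϱ hϱR ρ d Θ Ξ => ?_⟩
  have hβϱ : |β₃ * ϱ| ≤ 1 / 2 := by
    rw [abs_of_nonneg (by positivity)]
    exact mul_le_of_le_div_of_le hβ₃.le hϱR hR₀ (by rwa [div_div])
  have hCϱ : C₄ * ϱ ^ 2 ≤ 2 * ((2 / 3) * γ + b * 𝒞) :=
    mul_le_of_le_div_of_le (by positivity) (by gcongr) (by positivity) hCR₀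
  calc _ ≤ C₄ * ϱ ^ 2 * ((3 / 4) * ‖ρ‖ ^ 2 + (3 / 4) * ‖d‖ ^ 2 + (c₁ / (4 * 𝒞)) * ‖Θ‖ ^ 2
          + (3 * c₂ / (4 * γ)) * ‖Ξ‖ ^ 2) := by
        gcongr C₄ * ϱ ^ 2 * (?_ + _ + _)
        exact half_sq_sub_re_mul_conj_add_half_sq_le hβϱ ρ d
    _ = (3 * C₄ / 4) * ϱ ^ 2 * ‖ρ‖ ^ 2 + (3 * C₄ / 4) * ϱ ^ 2 * ‖d‖ ^ 2
          + (C₄ * (c₁ / (4 * 𝒞))) * ϱ ^ 2 * ‖Θ‖ ^ 2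
          + (C₄ * ϱ ^ 2 / 2 * (3 * c₂ / (2 * γ))) * ‖Ξ‖ ^ 2 := by ring
    _ ≤ _ := by
        gcongr ?_ * _ * _ + ?_ * _ * _ + ?_ * _ * _ + ?_ * _
        · linarith
        · linarith
        · exact mul_le_sub_two_mul_sq_of_le_div h𝒞 hc₁pos hβc hCc₃
        · rw [mul_div_right_comm (3 * c₂), mul_comm (3 * c₂ / (2 * γ))]
          gcongr
          have hP : 0 ≤ (4 * κ * γ + 9 * a * b * 𝒞) * ϱ ^ 2 / (3 * (3 * b * 𝒞 + 2 * γ)) := by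
            positivity
          linarith
end
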